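/- Relation (iv) of the generalized-tie relations in the tied pseudo braid monoid: for every n ≥ 2 and all indices 1 ≤ i and i+1 < j ≤ n, the equality p_{j−1} η_{i,j} = η_{i,j−1} p_{j−1} holds in the tied pseudo braid monoid TPM_n. -/

import Mathlib

/-!
The tied pseudo braid monoid `TPM n` (n ≥ 2), presented by generators
σ_1,…,σ_{n−1}, σ_1⁻¹,…,σ_{n−1}⁻¹, p_1,…,p_{n−1}, η_1,…,η_{n−1} subject to the
relations listed in the inductive `TPMRel` below.
-/

/-- Generators of the tied pseudo braid monoid: σ_i, σ_i⁻¹, p_i and η_i for 1 ≤ i ≤ n−1. -/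
inductive TPMGen (n : ℕ) : Type
  | sig (i : ℕ) (h : 1 ≤ i ∧ i ≤ n - 1) : TPMGen n
  | sigInv (i : ℕ) (h : 1 ≤ i ∧ i ≤ n - 1) : TPMGen n
  | p (i : ℕ) (h : 1 ≤ i ∧ i ≤ n - 1) : TPMGen n
  | eta (i : ℕ) (h : 1 ≤ i ∧ i ≤ n - 1) : TPMGen n

/-- The word σ_i in the free monoid on the generators. -/
def wS (n i : ℕ) : FreeMonoid (TPMGen n) :=
  if h : 1 ≤ i ∧ i ≤ n - 1 then FreeMonoid.of (TPMGen.sig i h) else 1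

/-- The word σ_i⁻¹ in the free monoid on the generators. -/
def wSI (n i : ℕ) : FreeMonoid (TPMGen n) :=
  if h : 1 ≤ i ∧ i ≤ n - 1 then FreeMonoid.of (TPMGen.sigInv i h) else 1

/-- The word p_i in the free monoid on the generators. -/
def wP (n i : ℕ) : FreeMonoid (TPMGen n) :=
  if h : 1 ≤ i ∧ i ≤ n - 1 then FreeMonoid.of (TPMGen.p i h) else 1

/-- The word η_i in the free monoid on the generators. -/
def wE (n i : ℕ) : FreeMonoid (TPMGen n) :=
  if h : 1 ≤ i ∧ i ≤ n - 1 then FreeMonoid.of (TPMGen.eta i h) else 1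

/-- The defining relations of the tied pseudo braid monoid `TPM n`. -/
inductive TPMRel (n : ℕ) : FreeMonoid (TPMGen n) → FreeMonoid (TPMGen n) → Prop
  /- σ_i σ_i⁻¹ = σ_i⁻¹ σ_i = 1 -/
  | inv_right (i : ℕ) (h : 1 ≤ i ∧ i ≤ n - 1) :
      TPMRel n (wS n i * wSI n i) 1
  | inv_left (i : ℕ) (h : 1 ≤ i ∧ i ≤ n - 1) :
      TPMRel n (wSI n i * wS n i) 1
  /- σ_i σ_{i+1} σ_i = σ_{i+1} σ_i σ_{i+1} -/
  | braid (i : ℕ) (h : 1 ≤ i ∧ i + 1 ≤ n - 1) :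
      TPMRel n (wS n i * wS n (i+1) * wS n i) (wS n (i+1) * wS n i * wS n (i+1))
  /- σ_i σ_j = σ_j σ_i for |i−j| ≥ 2 -/
  | sig_comm (i j : ℕ) (hi : 1 ≤ i ∧ i ≤ n - 1) (hj : 1 ≤ j ∧ j ≤ n - 1)
      (hij : i + 2 ≤ j ∨ j + 2 ≤ i) :
      TPMRel n (wS n i * wS n j) (wS n j * wS n i)
  /- p_i p_j = p_j p_i for |i−j| ≥ 2 -/
  | p_comm (i j : ℕ) (hi : 1 ≤ i ∧ i ≤ n - 1) (hj : 1 ≤ j ∧ j ≤ n - 1)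
      (hij : i + 2 ≤ j ∨ j + 2 ≤ i) :
      TPMRel n (wP n i * wP n j) (wP n j * wP n i)
  /- p_i σ_j^{±1} = σ_j^{±1} p_i for |i−j| ≥ 2 -/
  | p_sig_far_pos (i j : ℕ) (hi : 1 ≤ i ∧ i ≤ n - 1) (hj : 1 ≤ j ∧ j ≤ n - 1)
      (hij : i + 2 ≤ j ∨ j + 2 ≤ i) :
      TPMRel n (wP n i * wS n j) (wS n j * wP n i)
  | p_sig_far_neg (i j : ℕ) (hi : 1 ≤ i ∧ i ≤ n - 1) (hj : 1 ≤ j ∧ j ≤ n - 1)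
      (hij : i + 2 ≤ j ∨ j + 2 ≤ i) :
      TPMRel n (wP n i * wSI n j) (wSI n j * wP n i)
  /- p_i σ_i^{±1} = σ_i^{±1} p_i -/
  | p_sig_pos (i : ℕ) (h : 1 ≤ i ∧ i ≤ n - 1) :
      TPMRel n (wP n i * wS n i) (wS n i * wP n i)
  | p_sig_neg (i : ℕ) (h : 1 ≤ i ∧ i ≤ n - 1) :
      TPMRel n (wP n i * wSI n i) (wSI n i * wP n i)
  /- σ_i σ_{i+1} p_i = p_{i+1} σ_i σ_{i+1} -/
  | ssp (i : ℕ) (h : 1 ≤ i ∧ i + 1 ≤ n - 1) :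
      TPMRel n (wS n i * wS n (i+1) * wP n i) (wP n (i+1) * wS n i * wS n (i+1))
  /- σ_{i+1} σ_i p_{i+1} = p_i σ_{i+1} σ_i -/
  | ssp' (i : ℕ) (h : 1 ≤ i ∧ i + 1 ≤ n - 1) :
      TPMRel n (wS n (i+1) * wS n i * wP n (i+1)) (wP n i * wS n (i+1) * wS n i)
  /- η_i η_j = η_j η_i for all i, j -/
  | eta_comm (i j : ℕ) (hi : 1 ≤ i ∧ i ≤ n - 1) (hj : 1 ≤ j ∧ j ≤ n - 1) :
      TPMRel n (wE n i * wE n j) (wE n j * wE n i)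
  /- η_i σ_i = σ_i η_i -/
  | eta_sig (i : ℕ) (h : 1 ≤ i ∧ i ≤ n - 1) :
      TPMRel n (wE n i * wS n i) (wS n i * wE n i)
  /- η_i σ_j = σ_j η_i for |i−j| ≥ 2 -/
  | eta_sig_far (i j : ℕ) (hi : 1 ≤ i ∧ i ≤ n - 1) (hj : 1 ≤ j ∧ j ≤ n - 1)
      (hij : i + 2 ≤ j ∨ j + 2 ≤ i) :
      TPMRel n (wE n i * wS n j) (wS n j * wE n i)
  /- η_i σ_j σ_i^ε = σ_j σ_i^ε η_j for |i−j| = 1, ε = ±1 -/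
  | eta_slide_pos (i j : ℕ) (hi : 1 ≤ i ∧ i ≤ n - 1) (hj : 1 ≤ j ∧ j ≤ n - 1)
      (hij : j = i + 1 ∨ i = j + 1) :
      TPMRel n (wE n i * wS n j * wS n i) (wS n j * wS n i * wE n j)
  | eta_slide_neg (i j : ℕ) (hi : 1 ≤ i ∧ i ≤ n - 1) (hj : 1 ≤ j ∧ j ≤ n - 1)
      (hij : j = i + 1 ∨ i = j + 1) :
      TPMRel n (wE n i * wS n j * wSI n i) (wS n j * wSI n i * wE n j)
  /- η_i η_j σ_i = η_j σ_i η_j = σ_i η_i η_j for |i−j| = 1 -/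
  | eta_eta_sig₁ (i j : ℕ) (hi : 1 ≤ i ∧ i ≤ n - 1) (hj : 1 ≤ j ∧ j ≤ n - 1)
      (hij : j = i + 1 ∨ i = j + 1) :
      TPMRel n (wE n i * wE n j * wS n i) (wE n j * wS n i * wE n j)
  | eta_eta_sig₂ (i j : ℕ) (hi : 1 ≤ i ∧ i ≤ n - 1) (hj : 1 ≤ j ∧ j ≤ n - 1)
      (hij : j = i + 1 ∨ i = j + 1) :
      TPMRel n (wE n j * wS n i * wE n j) (wS n i * wE n i * wE n j)
  /- η_i² = η_i -/
  | eta_idem (i : ℕ) (h : 1 ≤ i ∧ i ≤ n - 1) :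
      TPMRel n (wE n i * wE n i) (wE n i)
  /- p_i η_i = η_i p_i -/
  | p_eta (i : ℕ) (h : 1 ≤ i ∧ i ≤ n - 1) :
      TPMRel n (wP n i * wE n i) (wE n i * wP n i)
  /- p_i η_j = η_j p_i for |i−j| ≥ 2 -/
  | p_eta_far (i j : ℕ) (hi : 1 ≤ i ∧ i ≤ n - 1) (hj : 1 ≤ j ∧ j ≤ n - 1)
      (hij : i + 2 ≤ j ∨ j + 2 ≤ i) :
      TPMRel n (wP n i * wE n j) (wE n j * wP n i)
  /- η_i p_j p_i = p_j p_i η_j for |i−j| = 1 -/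
  | eta_pp (i j : ℕ) (hi : 1 ≤ i ∧ i ≤ n - 1) (hj : 1 ≤ j ∧ j ≤ n - 1)
      (hij : j = i + 1 ∨ i = j + 1) :
      TPMRel n (wE n i * wP n j * wP n i) (wP n j * wP n i * wE n j)
  /- η_i η_j p_i = η_j p_i η_j = p_i η_i η_j for |i−j| = 1 -/
  | eta_eta_p₁ (i j : ℕ) (hi : 1 ≤ i ∧ i ≤ n - 1) (hj : 1 ≤ j ∧ j ≤ n - 1)
      (hij : j = i + 1 ∨ i = j + 1) :
      TPMRel n (wE n i * wE n j * wP n i) (wE n j * wP n i * wE n j)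
  | eta_eta_p₂ (i j : ℕ) (hi : 1 ≤ i ∧ i ≤ n - 1) (hj : 1 ≤ j ∧ j ≤ n - 1)
      (hij : j = i + 1 ∨ i = j + 1) :
      TPMRel n (wE n j * wP n i * wE n j) (wP n i * wE n i * wE n j)
  /- η_i p_j σ_i = p_j σ_i η_j for |i−j| = 1 -/
  | eta_ps (i j : ℕ) (hi : 1 ≤ i ∧ i ≤ n - 1) (hj : 1 ≤ j ∧ j ≤ n - 1)
      (hij : j = i + 1 ∨ i = j + 1) :
      TPMRel n (wE n i * wP n j * wS n i) (wP n j * wS n i * wE n j)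
  /- η_i σ_j p_i = σ_j p_i η_j for |i−j| = 1 -/
  | eta_sp (i j : ℕ) (hi : 1 ≤ i ∧ i ≤ n - 1) (hj : 1 ≤ j ∧ j ≤ n - 1)
      (hij : j = i + 1 ∨ i = j + 1) :
      TPMRel n (wE n i * wS n j * wP n i) (wS n j * wP n i * wE n j)
  /- p_i η_j = σ_i η_j σ_i⁻¹ p_i for |i−j| = 1 -/
  | p_eta_conj (i j : ℕ) (hi : 1 ≤ i ∧ i ≤ n - 1) (hj : 1 ≤ j ∧ j ≤ n - 1)
      (hij : j = i + 1 ∨ i = j + 1) :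
      TPMRel n (wP n i * wE n j) (wS n i * wE n j * wSI n i * wP n i)

/-- The tied pseudo braid monoid `TPM n`: the quotient of the free monoid on the
generators by the congruence generated by the defining relations. -/
def TPM (n : ℕ) := (conGen (TPMRel n)).Quotient

instance (n : ℕ) : Monoid (TPM n) :=
  inferInstanceAs (Monoid ((conGen (TPMRel n)).Quotient))

/-- The generator σ_i of `TPM n` (defined for 1 ≤ i ≤ n−1; junk value 1 otherwise). -/
def TPM.s (n i : ℕ) : TPM n := (conGen (TPMRel n)).mk' (wS n i)

/-- The generator σ_i⁻¹ of `TPM n` (defined for 1 ≤ i ≤ n−1; junk value 1 otherwise). -/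
def TPM.sInv (n i : ℕ) : TPM n := (conGen (TPMRel n)).mk' (wSI n i)

/-- The generator p_i of `TPM n` (defined for 1 ≤ i ≤ n−1; junk value 1 otherwise). -/
def TPM.p (n i : ℕ) : TPM n := (conGen (TPMRel n)).mk' (wP n i)

/-- The generator η_i of `TPM n` (defined for 1 ≤ i ≤ n−1; junk value 1 otherwise). -/
def TPM.e (n i : ℕ) : TPM n := (conGen (TPMRel n)).mk' (wE n i)

/-- The generalized tie η_{i,j} = σ_i σ_{i+1} ⋯ σ_{j−2} η_{j−1} σ_{j−2}⁻¹ ⋯ σ_{i+1}⁻¹ σ_i⁻¹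
in `TPM n`, for 1 ≤ i < j ≤ n (in particular η_{i,i+1} = η_i). -/
def TPM.genTie (n i j : ℕ) : TPM n :=
  (((List.range' i (j - 1 - i)).map (TPM.s n)).prod) * TPM.e n (j - 1) *
    (((List.range' i (j - 1 - i)).reverse.map (TPM.sInv n)).prod)

/-!
Write η_{i,j} = S (σ_{j−2} η_{j−1} σ_{j−2}⁻¹) S' where S and S' are words in σ_k^{±1} with
k ≤ j − 3, all of which commute with p_{j−1}. The defining relation
η_{j−2} p_{j−1} σ_{j−2} = p_{j−1} σ_{j−2} η_{j−1} turns p_{j−1} σ_{j−2} η_{j−1} σ_{j−2}⁻¹ into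
η_{j−2} p_{j−1}, and moving p_{j−1} through S' leaves S η_{j−2} S' p_{j−1} = η_{i,j−1} p_{j−1}.
-/

namespace TPM

variable {n : ℕ}

theorem mk'_eq_of_rel {a b : FreeMonoid (TPMGen n)} (h : TPMRel n a b) :
    (conGen (TPMRel n)).mk' a = (conGen (TPMRel n)).mk' b :=
  (Con.eq _).2 (ConGen.Rel.of a b h)

theorem commute_p_s_of_far {m k : ℕ} (h : m + 2 ≤ k ∨ k + 2 ≤ m) :
    Commute (p n m) (s n k) := by
  by_cases hm : 1 ≤ m ∧ m ≤ n - 1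
  · by_cases hk : 1 ≤ k ∧ k ≤ n - 1
    · exact mk'_eq_of_rel (.p_sig_far_pos m k hm hk h)
    · simp only [s, wS, dif_neg hk]
      exact Commute.one_right _
  · simp only [p, wP, dif_neg hm]
    exact Commute.one_left _

theorem commute_p_sInv_of_far {m k : ℕ} (h : m + 2 ≤ k ∨ k + 2 ≤ m) :
    Commute (p n m) (sInv n k) := by
  by_cases hm : 1 ≤ m ∧ m ≤ n - 1
  · by_cases hk : 1 ≤ k ∧ k ≤ n - 1
    · exact mk'_eq_of_rel (.p_sig_far_neg m k hm hk h)
    · simp only [sInv, wSI, dif_neg hk]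
      exact Commute.one_right _
  · simp only [p, wP, dif_neg hm]
    exact Commute.one_left _

theorem s_mul_sInv {k : ℕ} (hk : 1 ≤ k ∧ k ≤ n - 1) : s n k * sInv n k = 1 :=
  mk'_eq_of_rel (.inv_right k hk)

theorem e_mul_p_mul_s {m : ℕ} (hm : 1 ≤ m ∧ m + 1 ≤ n - 1) :
    e n m * p n (m + 1) * s n m = p n (m + 1) * s n m * e n (m + 1) :=
  mk'_eq_of_rel (.eta_ps m (m + 1) ⟨hm.1, by omega⟩ ⟨by omega, hm.2⟩ (.inl rfl))

theorem p_mul_s_mul_e_mul_sInv {m : ℕ} (hm : 1 ≤ m ∧ m + 1 ≤ n - 1) :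
    p n (m + 1) * (s n m * e n (m + 1) * sInv n m) = e n m * p n (m + 1) := by
  calc p n (m + 1) * (s n m * e n (m + 1) * sInv n m)
      = e n m * p n (m + 1) * s n m * sInv n m := by
        rw [e_mul_p_mul_s hm]; simp only [mul_assoc]
    _ = e n m * p n (m + 1) := by
        rw [mul_assoc _ (s n m), s_mul_sInv ⟨hm.1, by omega⟩, mul_one]

theorem genTie_add_two {i m : ℕ} (h : i ≤ m) :
    genTie n i (m + 2) = ((List.range' i (m - i)).map (s n)).prod *
      (s n m * e n (m + 1) * sInv n m) * ((List.range' i (m - i)).reverse.map (sInv n)).prod := by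
  have hrange : List.range' i (m + 1 - i) = List.range' i (m - i) ++ [m] := by
    rw [show m + 1 - i = m - i + 1 by omega, List.range'_1_concat, Nat.add_sub_cancel' h]
  rw [genTie, show m + 2 - 1 = m + 1 from rfl, hrange]
  simp only [List.reverse_append, List.map_append, List.prod_append, List.reverse_singleton,
    List.map_singleton, List.prod_singleton, mul_assoc]

end TPM

theorem tpm_genTie_rel_iv_general (n : ℕ) (i j : ℕ)
    (hi : 1 ≤ i) (hij : i + 1 < j) (hj : j ≤ n) :
    TPM.p n (j - 1) * TPM.genTie n i j = TPM.genTie n i (j - 1) * TPM.p n (j - 1) := by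
  obtain ⟨m, rfl⟩ : ∃ m, j = m + 2 := ⟨j - 2, by omega⟩
  rw [show m + 2 - 1 = m + 1 from rfl, TPM.genTie_add_two (by omega), TPM.genTie,
    show m + 1 - 1 = m from rfl]
  set S := ((List.range' i (m - i)).map (TPM.s n)).prod
  set S' := ((List.range' i (m - i)).reverse.map (TPM.sInv n)).prod
  have hfar : ∀ k ∈ List.range' i (m - i), m + 1 + 2 ≤ k ∨ k + 2 ≤ m + 1 := fun k hk => by
    rw [List.mem_range'_1] at hk; omega
  have hS : Commute (TPM.p n (m + 1)) S := .list_prod_right _ _ fun x hx => by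
    obtain ⟨k, hk, rfl⟩ := List.mem_map.1 hx
    exact TPM.commute_p_s_of_far (hfar k hk)
  have hS' : Commute (TPM.p n (m + 1)) S' := .list_prod_right _ _ fun x hx => by
    obtain ⟨k, hk, rfl⟩ := List.mem_map.1 hx
    exact TPM.commute_p_sInv_of_far (hfar k (List.mem_reverse.1 hk))
  calc TPM.p n (m + 1) * (S * (TPM.s n m * TPM.e n (m + 1) * TPM.sInv n m) * S')
      = S * (TPM.p n (m + 1) * (TPM.s n m * TPM.e n (m + 1) * TPM.sInv n m)) * S' := by
        rw [← mul_assoc, ← mul_assoc, hS.eq, mul_assoc S]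
    _ = S * TPM.e n m * (TPM.p n (m + 1) * S') := by
        rw [TPM.p_mul_s_mul_e_mul_sInv ⟨by omega, by omega⟩]; simp only [mul_assoc]
    _ = S * TPM.e n m * S' * TPM.p n (m + 1) := by rw [hS'.eq]; simp only [mul_assoc]

/-- **Relation (iv) of the generalized-tie relations in `TPM n`**: for every n ≥ 2 and
indices 1 ≤ i with i+1 < j ≤ n, p_{j−1} η_{i,j} = η_{i,j−1} p_{j−1} holds in `TPM n`. -/
theorem tpm_genTie_rel_iv (n : ℕ) (hn : 2 ≤ n) (i j : ℕ)
    (hi : 1 ≤ i) (hij : i + 1 < j) (hj : j ≤ n) :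
    TPM.p n (j - 1) * TPM.genTie n i j = TPM.genTie n i (j - 1) * TPM.p n (j - 1) :=
  tpm_genTie_rel_iv_general n i j hi hij hj
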